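/- arXiv:1512.03296 — 3 statements merged into one kernel-verified Lean document; each statement's English description precedes it below -/
import Mathlib

section
/- Let X be a type, let f : ℤ → X and d : ℤ → ℕ be functions, and let S = { q ∈ ℤ | |q| ≥ 2 }. Assume: (i) for every q ∈ S, (d q : ℤ) does not divide q; and (ii) for all q, q' ∈ S, if f q = f q' then (d q : ℤ) divides q - q'. Then the image f(S) = { f q | q ∈ S } is an infinite set. -/
/-- Combinatorial core: if for each `q` with `|q| ≥ 2` the natural number `d q`
does not divide `q`, and `f q = f q'` implies `d q ∣ q - q'`, then the image of
`{q | |q| ≥ 2}` under `f` is infinite. -/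
theorem stmt_2 {X : Type*} (f : ℤ → X) (d : ℤ → ℕ)
    (h1 : ∀ q ∈ {q : ℤ | 2 ≤ |q|}, ¬ (d q : ℤ) ∣ q)
    (h2 : ∀ q ∈ {q : ℤ | 2 ≤ |q|}, ∀ q' ∈ {q : ℤ | 2 ≤ |q|},
      f q = f q' → (d q : ℤ) ∣ q - q') :
    (f '' {q : ℤ | 2 ≤ |q|}).Infinite := by
  -- define the sequence
  let g : ℕ → ℤ := fun n => Nat.rec 2 (fun _ x => 2 * x * (max (d x) 1 : ℤ)) n
  have hg0 : g 0 = 2 := rfl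
  have hgs : ∀ n, g (n + 1) = 2 * g n * (max (d (g n)) 1 : ℤ) := fun n => rfl
  have hge : ∀ n, 2 ≤ g n := by
    intro n
    induction n with
    | zero => norm_num [hg0]
    | succ n ih =>
      rw [hgs]
      have h1' : (1 : ℤ) ≤ (max (d (g n)) 1 : ℤ) := by exact le_max_right _ 1
      nlinarith
  have hmem : ∀ n, g n ∈ {q : ℤ | 2 ≤ |q|} := by
    intro n
    have := hge n
    simp only [Set.mem_setOf_eq]
    rw [abs_of_pos (by linarith)]; exact this
  have hdvd1 : ∀ n, g n ∣ g (n + 1) := by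
    intro n
    rw [hgs]; exact ⟨2 * (max (d (g n)) 1 : ℤ), by ring⟩
  have hdvd2 : ∀ n, d (g n) ≠ 0 → (d (g n) : ℤ) ∣ g (n + 1) := by
    intro n hne
    rw [hgs]
    have : max ((d (g n)) : ℤ) 1 = ((d (g n)) : ℤ) :=
      max_eq_left (by exact_mod_cast Nat.one_le_iff_ne_zero.2 hne)
    refine ⟨2 * g n, ?_⟩
    rw [this]; ring
  have hchain : ∀ m n, m ≤ n → g m ∣ g n := by
    intro m n hmn
    induction n with
    | zero => rw [Nat.le_zero.1 hmn]
    | succ n ih =>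
      rcases eq_or_lt_of_le hmn with h | h
      · rw [h]
      · exact (ih (Nat.lt_succ_iff.1 h)).trans (hdvd1 n)
  have hmono : StrictMono g := by
    apply strictMono_nat_of_lt_succ
    intro n
    rw [hgs]
    have h1' : (1 : ℤ) ≤ (max (d (g n)) 1 : ℤ) := by exact le_max_right _ 1
    nlinarith [hge n]
  -- f ∘ g is injective
  have key : ∀ m n, m < n → f (g m) ≠ f (g n) := by
    intro m n hlt h
    have hfd := h2 (g m) (hmem m) (g n) (hmem n) h
    rcases eq_or_ne (d (g m)) 0 with h0 | h0
    · rw [h0] at hfd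
      simp only [Nat.cast_zero, zero_dvd_iff, sub_eq_zero] at hfd
      exact absurd hfd (hmono.injective.ne (by omega))
    · have hgn : (d (g m) : ℤ) ∣ g n :=
        (hdvd2 m h0).trans (hchain (m + 1) n hlt)
      have : (d (g m) : ℤ) ∣ g m := by
        have := dvd_add hfd hgn
        simpa using this
      exact h1 (g m) (hmem m) this
  have hinj : Function.Injective (f ∘ g) := by
    intro m n h
    by_contra hne
    rcases Nat.lt_or_ge m n with hlt | hge'
    · exact key m n hlt h
    · exact key n m (by omega) h.symm
  have : Set.range (f ∘ g) ⊆ f '' {q : ℤ | 2 ≤ |q|} := by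
    rintro x ⟨n, rfl⟩
    exact ⟨g n, hmem n, rfl⟩
  exact (Set.infinite_range_of_injective hinj).mono this
end

section
/- Let S : ℤ → Set (ℂˣ × ℂˣ) be a family of subsets such that for every integer q with |q| ≥ 2: (i) every point (m, ℓ) ∈ S q satisfies m · ℓ^q = 1, and (ii) there exists a point (m, ℓ) ∈ S q with m ≠ 1. Then the collection { S q | q ∈ ℤ, |q| ≥ 2 } contains infinitely many distinct sets (i.e., the image of q ↦ S q over { q | |q| ≥ 2 } is infinite). -/
/-!
Suppose only finitely many sets `S q` occur, and pick in each of them a point `(m, ℓ)` with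
`m ≠ 1`. Every `q` with `|q| ≥ 2` then solves `m * ℓ ^ q = 1` for one of these finitely many
points. But for a fixed point with `m ≠ 1` the solutions are sparse: if `ℓ` has finite order `n`,
no multiple of `n` is a solution, and if `ℓ` has infinite order there is at most one solution.
So all but finitely many multiples of the product of the finite orders solve none of the
equations.
-/

theorem exists_pos_finite_setOf_dvd_and_mul_zpow_eq_one {G : Type*} [Group G] {m : G}
    (hm : m ≠ 1) (ℓ : G) :
    ∃ n : ℕ, 0 < n ∧ {q : ℤ | (n : ℤ) ∣ q ∧ m * ℓ ^ q = 1}.Finite := by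
  by_cases hℓ : IsOfFinOrder ℓ
  · refine ⟨orderOf ℓ, hℓ.orderOf_pos, Set.finite_empty.subset ?_⟩
    rintro q ⟨hdvd, hq⟩
    rw [orderOf_dvd_iff_zpow_eq_one.mp hdvd, mul_one] at hq
    exact hm hq
  · refine ⟨1, one_pos, Set.Subsingleton.finite ?_⟩
    rintro q ⟨-, hq⟩ q' ⟨-, hq'⟩
    exact injective_zpow_iff_not_isOfFinOrder.mpr hℓ (mul_left_cancel (hq.trans hq'.symm))

theorem infinite_setOf_forall_notMem_of_finite_inter_dvd {ι : Type*} [Finite ι]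
    {A : ι → Set ℤ} {n : ι → ℕ} (hn : ∀ i, 0 < n i)
    (hA : ∀ i, {q : ℤ | (n i : ℤ) ∣ q ∧ q ∈ A i}.Finite) :
    {q : ℤ | ∀ i, q ∉ A i}.Infinite := by
  have := Fintype.ofFinite ι
  set N : ℤ := ∏ i, (n i : ℤ)
  have hN : N ≠ 0 := Finset.prod_ne_zero_iff.mpr fun i _ => by exact_mod_cast (hn i).ne'
  have hmultiples : (Set.range (N * ·)).Infinite :=
    Set.infinite_range_of_injective (mul_right_injective₀ hN)
  refine (hmultiples.sdiff (Set.finite_iUnion hA)).mono ?_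
  rintro _ ⟨⟨k, rfl⟩, hnot⟩ i hi
  refine hnot (Set.mem_iUnion.mpr ⟨i, ?_, hi⟩)
  exact (Finset.dvd_prod_of_mem (fun i => (n i : ℤ)) (Finset.mem_univ i)).mul_right k

/-- If for every `q` with `|q| ≥ 2`, every point `(m, ℓ)` of `S q` satisfies the
filling relation `m * ℓ^q = 1` and some point of `S q` has `m ≠ 1`, then the
collection of the sets `S q`, `|q| ≥ 2`, is infinite. -/
theorem stmt_3 (S : ℤ → Set (ℂˣ × ℂˣ))
    (hrel : ∀ q : ℤ, 2 ≤ |q| → ∀ p ∈ S q, p.1 * p.2 ^ q = 1)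
    (hnt : ∀ q : ℤ, 2 ≤ |q| → ∃ p ∈ S q, p.1 ≠ 1) :
    (S '' {q : ℤ | 2 ≤ |q|}).Infinite := by
  intro hfin
  have := hfin.to_subtype
  have hpoint : ∀ T : S '' {q : ℤ | 2 ≤ |q|}, ∃ p ∈ (T : Set (ℂˣ × ℂˣ)), p.1 ≠ 1 := by
    rintro ⟨_, q, hq, rfl⟩
    exact hnt q hq
  choose p hpT hp1 using hpoint
  choose n hn hfinite using fun T =>
    exists_pos_finite_setOf_dvd_and_mul_zpow_eq_one (hp1 T) (p T).2
  have hsmall : {q : ℤ | |q| < 2}.Finite :=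
    (Set.finite_Ioo (-2) 2).subset fun q hq => abs_lt.mp hq
  obtain ⟨q, hq, hnotsmall⟩ :=
    ((infinite_setOf_forall_notMem_of_finite_inter_dvd hn hfinite).sdiff hsmall).nonempty
  have hq2 : 2 ≤ |q| := not_lt.mp hnotsmall
  exact hq ⟨S q, q, hq2, rfl⟩ (hrel q hq2 _ (hpT ⟨S q, q, hq2, rfl⟩))
end

section
/- Let X be a nonempty Noetherian topological space and let k be a natural number. If there exists an infinite collection of pairwise distinct subsets of X, each of which is closed, irreducible, and of topological Krull dimension at least k (as a subspace), then the topological Krull dimension of X is at least k + 1. -/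
open TopologicalSpace Topology Order

/-!
Only finitely many members of an infinite family of irreducible sets can be irreducible
components, so some member `C` lies strictly inside a component `Z`. Pushing any chain of
irreducible closed subsets of `C` into `X` and appending `Z` gives a chain one step longer.
-/

theorem IsClosed.topologicalKrullDim_le_height {X : Type*} [TopologicalSpace X] {C : Set X}
    (hirr : IsIrreducible C) (hC : IsClosed C) :
    topologicalKrullDim C ≤ height (⟨C, hirr, hC⟩ : IrreducibleCloseds X) := by
  rw [height_eq_krullDim_Iic]
  let emb := hC.isClosedEmbedding_subtypeVal
  refine krullDim_le_of_strictMono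
    (fun T ↦ ⟨IrreducibleCloseds.map _ emb.continuous T, ?_⟩) fun S T hST ↦ ?_
  · exact closure_minimal (Set.image_subset_range _ _ |>.trans Subtype.range_coe.subset) hC
  · exact IrreducibleCloseds.map_strictMono_of_isInducing emb.isInducing hST

theorem IsClosed.topologicalKrullDim_add_one_le {X : Type*} [TopologicalSpace X] {C Z : Set X}
    (hirr : IsIrreducible C) (hC : IsClosed C) (hZirr : IsIrreducible Z) (hZ : IsClosed Z)
    (hCZ : C ⊂ Z) : topologicalKrullDim C + 1 ≤ topologicalKrullDim X :=
  calc topologicalKrullDim C + 1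
      ≤ height (⟨C, hirr, hC⟩ : IrreducibleCloseds X) + 1 := by
        gcongr; exact hC.topologicalKrullDim_le_height hirr
    _ ≤ height (⟨Z, hZirr, hZ⟩ : IrreducibleCloseds X) := by
        exact_mod_cast height_add_one_le (α := IrreducibleCloseds X) hCZ
    _ ≤ topologicalKrullDim X := height_le_krullDim _

theorem TopologicalSpace.NoetherianSpace.exists_mem_ssubset_irreducibleComponent {X : Type*}
    [TopologicalSpace X] [NoetherianSpace X] {𝒞 : Set (Set X)} (hinf : 𝒞.Infinite)
    (hirr : ∀ C ∈ 𝒞, IsIrreducible C) : ∃ C ∈ 𝒞, ∃ Z ∈ irreducibleComponents X, C ⊂ Z := by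
  obtain ⟨C, hC𝒞, hCnot⟩ : (𝒞 \ irreducibleComponents X).Nonempty :=
    (hinf.sdiff NoetherianSpace.finite_irreducibleComponents).nonempty
  obtain ⟨Z, hZ, hCZ⟩ := exists_mem_irreducibleComponents_subset_of_isIrreducible C (hirr C hC𝒞)
  exact ⟨C, hC𝒞, Z, hZ, hCZ.ssubset_of_ne fun h ↦ hCnot (h ▸ hZ)⟩

theorem stmt_4_general {X : Type*} [TopologicalSpace X]
    [TopologicalSpace.NoetherianSpace X] (k : ℕ)
    (𝒞 : Set (Set X)) (hinf : 𝒞.Infinite)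
    (hclosed : ∀ C ∈ 𝒞, IsClosed C)
    (hirr : ∀ C ∈ 𝒞, IsIrreducible C)
    (hdim : ∀ C ∈ 𝒞, (k : WithBot ℕ∞) ≤ topologicalKrullDim C) :
    (k : WithBot ℕ∞) + 1 ≤ topologicalKrullDim X := by
  obtain ⟨C, hC, Z, hZ, hCZ⟩ := NoetherianSpace.exists_mem_ssubset_irreducibleComponent hinf hirr
  calc (k : WithBot ℕ∞) + 1 ≤ topologicalKrullDim C + 1 := by gcongr; exact hdim C hC
    _ ≤ topologicalKrullDim X := (hclosed C hC).topologicalKrullDim_add_one_le (hirr C hC) hZ.1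
        (isClosed_of_mem_irreducibleComponents Z hZ) hCZ

/-- In a nonempty Noetherian topological space, an infinite collection of
pairwise distinct closed irreducible subsets, each of topological Krull
dimension at least `k`, forces the topological Krull dimension of the whole
space to be at least `k + 1`. -/
theorem stmt_4 {X : Type*} [TopologicalSpace X] [Nonempty X]
    [TopologicalSpace.NoetherianSpace X] (k : ℕ)
    (𝒞 : Set (Set X)) (hinf : 𝒞.Infinite)
    (hclosed : ∀ C ∈ 𝒞, IsClosed C)
    (hirr : ∀ C ∈ 𝒞, IsIrreducible C)
    (hdim : ∀ C ∈ 𝒞, (k : WithBot ℕ∞) ≤ topologicalKrullDim C) :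
    (k : WithBot ℕ∞) + 1 ≤ topologicalKrullDim X :=
  stmt_4_general k 𝒞 hinf hclosed hirr hdim
end
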